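/- arXiv:1509.07744 — 3 statements merged into one kernel-verified Lean document; each statement's English description precedes it below -/
import Mathlib

section
/- Let p be a prime and let T, N, x₁, x₂, y₁, y₂ be integers. If p divides x₁² + T·x₁x₂ + N·x₂² and p divides x₂y₁ − x₁y₂, then p² divides the product (x₁² + T·x₁x₂ + N·x₂²)·(y₁² + T·y₁y₂ + N·y₂²). -/
/-- If a prime `p` divides the binary quadratic form `x₁² + T·x₁x₂ + N·x₂²` at `(x₁, x₂)`
and divides the skew pairing `x₂y₁ − x₁y₂`, then `p²` divides the product of the values of
the form at `(x₁, x₂)` and at `(y₁, y₂)`. -/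
theorem stmt_5 (p : ℕ) (hp : p.Prime) (T N x₁ x₂ y₁ y₂ : ℤ)
    (h1 : (p : ℤ) ∣ x₁ ^ 2 + T * x₁ * x₂ + N * x₂ ^ 2)
    (h2 : (p : ℤ) ∣ x₂ * y₁ - x₁ * y₂) :
    (p : ℤ) ^ 2 ∣ (x₁ ^ 2 + T * x₁ * x₂ + N * x₂ ^ 2) * (y₁ ^ 2 + T * y₁ * y₂ + N * y₂ ^ 2) := by
  set t : ℤ := x₁ * y₁ + T * x₁ * y₂ + N * x₂ * y₂ with ht
  set s : ℤ := x₂ * y₁ - x₁ * y₂ with hs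
  have key : (x₁ ^ 2 + T * x₁ * x₂ + N * x₂ ^ 2) * (y₁ ^ 2 + T * y₁ * y₂ + N * y₂ ^ 2)
      = t ^ 2 + T * t * s + N * s ^ 2 := by ring
  have hpprod : (p : ℤ) ∣ t ^ 2 + T * t * s + N * s ^ 2 := key ▸ h1.mul_right _
  have hpt2 : (p : ℤ) ∣ t ^ 2 := by
    have : t ^ 2 = (t ^ 2 + T * t * s + N * s ^ 2) - (T * t + N * s) * s := by ring
    rw [this]
    exact dvd_sub hpprod (Dvd.dvd.mul_left h2 _)
  have hpt : (p : ℤ) ∣ t := by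
    have : Prime (p : ℤ) := Nat.prime_iff_prime_int.mp hp
    exact this.dvd_of_dvd_pow hpt2
  rw [key]
  have h1' : (p : ℤ) ^ 2 ∣ t ^ 2 := pow_dvd_pow_of_dvd hpt 2
  have h2' : (p : ℤ) ^ 2 ∣ T * t * s := by
    have : (p : ℤ) * (p : ℤ) ∣ t * s := mul_dvd_mul hpt h2
    rw [sq]
    calc (p : ℤ) * (p : ℤ) ∣ t * s := this
    _ ∣ T * t * s := ⟨T, by ring⟩
  have h3' : (p : ℤ) ^ 2 ∣ N * s ^ 2 := (pow_dvd_pow_of_dvd h2 2).mul_left N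
  exact dvd_add (dvd_add h1' h2') h3'
end

section
/- Let a be a squarefree integer with a ∉ {0,1}, L = ℚ(√a), σ the nontrivial automorphism of L, and τ ∈ 𝒪_L with {1, τ} a ℤ-basis of 𝒪_L; set D_L = τ − τ^σ and, for x, y ∈ 𝒪_L, let t̃r(x, y) := Tr_{L/ℚ}(x·y^σ·D_L^{−1}), which is a rational integer. Then for every finite set P of primes and all nonzero x, y ∈ 𝒪_L with t̃r(x, y) ≠ 0, one has μ_P²(N_{L/ℚ}(xy)·t̃r(x, y)) = μ_P²(N_{L/ℚ}(xy))·μ_P²(t̃r(x, y)). -/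
open scoped Classical in
/-- `muSqAway P k = 1` if `k` has no square prime factor `p²` with `p ∉ P`, and `0`
otherwise: the indicator of being squarefree away from the primes in `P`. -/
noncomputable def muSqAway (P : Finset ℕ) (k : ℤ) : ℤ :=
  if ∀ p : ℕ, p.Prime → p ∉ P → ¬ (p : ℤ) ^ 2 ∣ k then 1 else 0

/-!
Put `u = x·y^σ ∈ 𝓞_L`, `D = τ - τ^σ` and `s = Tr u ∈ ℤ`. As `σ` is an involution with `D^σ = -D`,
the skew-trace satisfies `t·D = u - u^σ`; together with `D² = Tr(τ)² - 4·N(τ)` this gives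
`4·N(xy) = 4·u·u^σ = s² - (Tr(τ)² - 4·N(τ))·t²`. Comparing parities, `s - Tr(τ)·t = 2r` with
`r ∈ ℤ`, so `N(xy) = r² + Tr(τ)·r·t + N(τ)·t²`. A prime dividing `N(xy)` and `t` then divides `r`,
hence its square divides `N(xy)`; so `p² ∣ N(xy)·t` forces `p² ∣ N(xy)` or `p² ∣ t`.
-/

theorem muSqAway_mul_of_sq_dvd (P : Finset ℕ) {m n : ℤ}
    (h : ∀ p : ℕ, p.Prime → (p : ℤ) ∣ m → (p : ℤ) ∣ n → (p : ℤ) ^ 2 ∣ m) :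
    muSqAway P (m * n) = muSqAway P m * muSqAway P n := by
  unfold muSqAway
  by_cases hmn : ∀ p : ℕ, p.Prime → p ∉ P → ¬ (p : ℤ) ^ 2 ∣ m * n
  · rw [if_pos hmn, if_pos fun p hp hpP hm ↦ hmn p hp hpP (hm.mul_right n),
      if_pos fun p hp hpP hn ↦ hmn p hp hpP (hn.mul_left m), mul_one]
  · push Not at hmn
    obtain ⟨p, hp, hpP, hpmn⟩ := hmn
    have hp' : Prime (p : ℤ) := Nat.prime_iff_prime_int.mp hp
    have hsq : (p : ℤ) ^ 2 ∣ m ∨ (p : ℤ) ^ 2 ∣ n := by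
      by_cases hpm : (p : ℤ) ∣ m
      · by_cases hpn : (p : ℤ) ∣ n
        · exact .inl (h p hp hpm hpn)
        · exact .inl (hp'.pow_dvd_of_dvd_mul_right 2 hpn hpmn)
      · exact .inr (hp'.pow_dvd_of_dvd_mul_left 2 hpm hpmn)
    rw [if_neg fun hfree ↦ hfree p hp hpP hpmn, eq_comm, mul_eq_zero]
    rcases hsq with hm | hn
    · exact .inl (if_neg fun hfree ↦ hfree p hp hpP hm)
    · exact .inr (if_neg fun hfree ↦ hfree p hp hpP hn)

theorem Prime.sq_dvd_of_eq_quadForm {p m r n b c : ℤ} (hp : Prime p)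
    (hm : m = r ^ 2 + b * r * n + c * n ^ 2) (hpm : p ∣ m) (hpn : p ∣ n) : p ^ 2 ∣ m := by
  have hpr : p ∣ r := hp.dvd_of_dvd_pow (n := 2) <| by
    rw [show r ^ 2 = m - (b * r + c * n) * n by rw [hm]; ring]
    exact dvd_sub hpm (dvd_mul_of_dvd_right hpn _)
  obtain ⟨r', rfl⟩ := hpr
  obtain ⟨n', rfl⟩ := hpn
  exact ⟨r' ^ 2 + b * r' * n' + c * n' ^ 2, by rw [hm]; ring⟩

theorem Int.exists_eq_quadForm_of_four_mul_eq {m s n b c : ℤ}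
    (h : 4 * m = s ^ 2 - (b ^ 2 - 4 * c) * n ^ 2) :
    ∃ r, m = r ^ 2 + b * r * n + c * n ^ 2 := by
  obtain ⟨r, hr⟩ : 2 ∣ s - b * n := Int.prime_two.dvd_of_dvd_pow (n := 2) <| by
    rw [show (s - b * n) ^ 2 = 4 * (m - c * n ^ 2) - 2 * (s - b * n) * (b * n) by
      linear_combination -h]
    exact ((by norm_num : (2 : ℤ) ∣ 4).mul_right _).sub ((dvd_mul_right 2 _).mul_right _)
  refine ⟨r, mul_left_cancel₀ (four_ne_zero (α := ℤ)) ?_⟩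
  linear_combination h + (s + 2 * r + b * n) * hr

theorem muSqAway_mul_of_four_mul_eq (P : Finset ℕ) {m n s b c : ℤ}
    (h : 4 * m = s ^ 2 - (b ^ 2 - 4 * c) * n ^ 2) :
    muSqAway P (m * n) = muSqAway P m * muSqAway P n := by
  obtain ⟨r, hr⟩ := Int.exists_eq_quadForm_of_four_mul_eq h
  exact muSqAway_mul_of_sq_dvd P fun p hp ↦
    (Nat.prime_iff_prime_int.mp hp).sq_dvd_of_eq_quadForm hr

namespace Algebra.IsQuadraticExtension

variable {F K : Type*} [Field F] [Field K] [Algebra F K] [IsQuadraticExtension F K]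
  [Algebra.IsSeparable F K] {σ : K ≃ₐ[F] K}

theorem univ_eq_pair [DecidableEq (K ≃ₐ[F] K)] (hσ : σ ≠ 1) :
    (Finset.univ : Finset (K ≃ₐ[F] K)) = {1, σ} := by
  refine (Finset.eq_of_subset_of_card_le (Finset.subset_univ _) ?_).symm
  rw [Finset.card_univ, ← Nat.card_eq_fintype_card, IsGalois.card_aut_eq_finrank,
    finrank_eq_two, Finset.card_pair hσ.symm]

theorem algebraMap_trace (hσ : σ ≠ 1) (z : K) : algebraMap F K (trace F K z) = z + σ z := by
  classical
  rw [trace_eq_sum_automorphisms, univ_eq_pair hσ, Finset.sum_pair hσ.symm]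
  rfl

theorem algebraMap_norm (hσ : σ ≠ 1) (z : K) : algebraMap F K (norm F z) = z * σ z := by
  classical
  rw [norm_eq_prod_automorphisms, univ_eq_pair hσ, Finset.prod_pair hσ.symm]
  rfl

theorem apply_apply (hσ : σ ≠ 1) (z : K) : σ (σ z) = z := by
  have h := congrArg σ (algebraMap_trace hσ z)
  rw [AlgEquiv.commutes, algebraMap_trace hσ, map_add] at h
  exact add_left_cancel (h.symm.trans (add_comm z (σ z)))

theorem algebraMap_trace_mul_inv_sub_mul (hσ : σ ≠ 1) {d : K} (hd : d - σ d ≠ 0) (z : K) :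
    algebraMap F K (trace F K (z * (d - σ d)⁻¹)) * (d - σ d) = z - σ z := by
  rw [algebraMap_trace hσ, map_mul, map_inv₀, map_sub, apply_apply hσ,
    show σ d - d = -(d - σ d) by ring, inv_neg]
  field_simp
  ring

end Algebra.IsQuadraticExtension

namespace NumberField.RingOfIntegers

open Algebra.IsQuadraticExtension

variable {L : Type*} [Field L] [NumberField L] [Algebra.IsQuadraticExtension ℚ L]
  {σ : L ≃ₐ[ℚ] L}

theorem intCast_trace (hσ : σ ≠ 1) (w : 𝓞 L) :
    ((Algebra.trace ℤ (𝓞 L) w : ℤ) : L) = w + σ w := by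
  rw [← map_intCast (algebraMap ℚ L), Algebra.coe_trace_int, algebraMap_trace hσ]

theorem intCast_norm (hσ : σ ≠ 1) (w : 𝓞 L) :
    ((Algebra.norm ℤ w : ℤ) : L) = w * σ w := by
  rw [← map_intCast (algebraMap ℚ L), Algebra.coe_norm_int, algebraMap_norm hσ]

end NumberField.RingOfIntegers

open NumberField RingOfIntegers Algebra.IsQuadraticExtension in
theorem stmt_6_general
    (L : Type*) [Field L] [NumberField L] (hL : Module.finrank ℚ L = 2)
    (σ : L ≃ₐ[ℚ] L) (τ : 𝓞 L) (P : Finset ℕ) (x y : 𝓞 L) (t : ℤ)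
    (ht : (t : ℚ) = Algebra.trace ℚ L ((x : L) * σ (y : L) * ((τ : L) - σ (τ : L))⁻¹))
    (ht0 : t ≠ 0) :
    muSqAway P (Algebra.norm ℤ (x * y) * t) =
      muSqAway P (Algebra.norm ℤ (x * y)) * muSqAway P t := by
  have : Algebra.IsQuadraticExtension ℚ L := ⟨hL⟩
  -- `0⁻¹ = 0` would make the skew-trace vanish
  have hD : (τ : L) - σ τ ≠ 0 := fun hD ↦ ht0 (by simpa [hD] using ht)
  have hσ : σ ≠ 1 := fun h ↦ hD (by simp [h])
  have htD : (t : L) * ((τ : L) - σ τ) = x * σ y - σ (x * σ y) := by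
    rw [← map_intCast (algebraMap ℚ L), ht, algebraMap_trace_mul_inv_sub_mul hσ hD]
  let u := x * mapAlgEquiv σ y
  refine muSqAway_mul_of_four_mul_eq P (s := Algebra.trace ℤ (𝓞 L) u)
    (b := Algebra.trace ℤ (𝓞 L) τ) (c := Algebra.norm ℤ τ) (Int.cast_injective (α := L) ?_)
  push_cast
  rw [intCast_norm hσ, intCast_trace hσ, intCast_trace hσ, intCast_norm hσ]
  have hu : ((mapAlgEquiv σ y : 𝓞 L) : L) = σ y := rfl
  rw [map_mul, apply_apply hσ] at htD
  simp only [u, map_mul, hu, apply_apply hσ]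
  linear_combination (t * ((τ : L) - σ τ) + (x * σ y - σ x * y)) * htD

open NumberField in
/-- Lemma 4.4: for a quadratic field `L = ℚ(√a)` with nontrivial automorphism `σ` and
`ℤ`-basis `{1, τ}` of `𝓞 L`, for any finite set `P` of primes and nonzero `x, y ∈ 𝓞 L`
whose skew-trace `t = Tr_{L/ℚ}(x·y^σ·(τ − τ^σ)⁻¹)` is nonzero, the indicator of
squarefreeness away from `P` is multiplicative across `N_{L/ℚ}(xy)` and `t`. -/
theorem stmt_6 (a : ℤ) (ha : Squarefree a) (ha0 : a ≠ 0) (ha1 : a ≠ 1)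
    (L : Type*) [Field L] [NumberField L] (hL : Module.finrank ℚ L = 2)
    (sqrta : L) (hsqrta : sqrta ^ 2 = (a : L))
    (σ : L ≃ₐ[ℚ] L) (hσ : σ ≠ AlgEquiv.refl)
    (τ : 𝓞 L) (bL : Module.Basis (Fin 2) ℤ (𝓞 L)) (hbL0 : bL 0 = 1) (hbL1 : bL 1 = τ)
    (P : Finset ℕ) (hP : ∀ p ∈ P, p.Prime)
    (x y : 𝓞 L) (hx : x ≠ 0) (hy : y ≠ 0) (t : ℤ)
    (ht : (t : ℚ) = Algebra.trace ℚ L ((x : L) * σ (y : L) * ((τ : L) - σ (τ : L))⁻¹))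
    (ht0 : t ≠ 0) :
    muSqAway P (Algebra.norm ℤ (x * y) * t) =
      muSqAway P (Algebra.norm ℤ (x * y)) * muSqAway P t :=
  stmt_6_general L hL σ τ P x y t ht ht0
end

section
/- For every real θ with 0 < θ < 1 there is a constant C, depending only on θ, such that for every positive integer d, the sum of h^{θ−1} over all positive integers h all of whose prime factors divide d satisfies Σ_{h : rad(h) ∣ d} h^{θ−1} = Π_{p ∣ d, p prime} (1 − p^{θ−1})^{−1} ≤ C·d^{θ}. -/
open Finset Filter

private noncomputable def stmtF (θ : ℝ) : ℕ →* ℝ where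
  toFun n := (n : ℝ) ^ (θ - 1)
  map_one' := by simp
  map_mul' m n := by
    push_cast
    exact Real.mul_rpow (Nat.cast_nonneg m) (Nat.cast_nonneg n)

/-- For `0 < θ < 1` there is `C = C(θ)` such that for every positive integer `d`, the sum of
`h^(θ−1)` over all positive integers `h` supported on the primes dividing `d` equals the
Euler product `∏_{p ∣ d} (1 − p^(θ−1))⁻¹` and is at most `C · d^θ`. -/
theorem stmt_13 (θ : ℝ) (hθ0 : 0 < θ) (hθ1 : θ < 1) :
    ∃ C : ℝ, 0 < C ∧ ∀ d : ℕ, 0 < d →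
      (∑' h : {h : ℕ // 0 < h ∧ h.primeFactors ⊆ d.primeFactors}, ((h : ℕ) : ℝ) ^ (θ - 1)) =
        (∏ p ∈ d.primeFactors, (1 - (p : ℝ) ^ (θ - 1))⁻¹) ∧
      (∑' h : {h : ℕ // 0 < h ∧ h.primeFactors ⊆ d.primeFactors}, ((h : ℕ) : ℝ) ^ (θ - 1)) ≤
        C * (d : ℝ) ^ θ := by
  have hθ1' : θ - 1 < 0 := by linarith
  -- `p ^ (θ-1) < 1` for primes
  have hfp : ∀ {p : ℕ}, p.Prime → ‖stmtF θ p‖ < 1 := by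
    intro p hp
    have h1 : (1 : ℝ) < p := by exact_mod_cast hp.one_lt
    have h0 : (0 : ℝ) ≤ (p : ℝ) ^ (θ - 1) := Real.rpow_nonneg (by positivity) _
    rw [show stmtF θ p = (p : ℝ) ^ (θ - 1) from rfl, Real.norm_eq_abs, abs_of_nonneg h0]
    exact Real.rpow_lt_one_of_one_lt_of_neg h1 hθ1'
  have hplt : ∀ {p : ℕ}, p.Prime → (p : ℝ) ^ (θ - 1) < 1 := by
    intro p hp
    have := hfp hp
    rwa [show stmtF θ p = (p : ℝ) ^ (θ - 1) from rfl, Real.norm_eq_abs,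
      abs_of_nonneg (Real.rpow_nonneg (by positivity) _)] at this
  -- the identity (Euler product)
  have key : ∀ d : ℕ,
      (∑' h : {h : ℕ // 0 < h ∧ h.primeFactors ⊆ d.primeFactors}, ((h : ℕ) : ℝ) ^ (θ - 1)) =
        ∏ p ∈ d.primeFactors, (1 - (p : ℝ) ^ (θ - 1))⁻¹ := by
    intro d
    have hs := (EulerProduct.summable_and_hasSum_factoredNumbers_prod_filter_prime_geometric
      hfp d.primeFactors).2
    have hfilter : d.primeFactors.filter Nat.Prime = d.primeFactors :=
      Finset.filter_true_of_mem fun p hp => Nat.prime_of_mem_primeFactors hp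
    rw [hfilter] at hs
    have hset : {h : ℕ | 0 < h ∧ h.primeFactors ⊆ d.primeFactors} =
        Nat.factoredNumbers d.primeFactors := by
      ext h
      simp only [Set.mem_setOf_eq, Nat.factoredNumbers, Nat.pos_iff_ne_zero, Finset.subset_iff]
      exact and_congr_right fun _ => by
        constructor
        · intro H p hp
          exact H (Nat.mem_primeFactors_iff_mem_primeFactorsList.mpr hp)
        · intro H p hp
          exact H p (Nat.mem_primeFactors_iff_mem_primeFactorsList.mp hp)
    calc (∑' h : {h : ℕ // 0 < h ∧ h.primeFactors ⊆ d.primeFactors}, ((h : ℕ) : ℝ) ^ (θ - 1))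
        = ∑' m : Nat.factoredNumbers d.primeFactors, stmtF θ m :=
          (Equiv.setCongr hset).tsum_eq fun m : Nat.factoredNumbers d.primeFactors => stmtF θ m
      _ = ∏ p ∈ d.primeFactors, (1 - stmtF θ p)⁻¹ := hs.tsum_eq
      _ = ∏ p ∈ d.primeFactors, (1 - (p : ℝ) ^ (θ - 1))⁻¹ := rfl
  -- the uniform bound on each factor
  have h2lt : (2 : ℝ) ^ (θ - 1) < 1 := Real.rpow_lt_one_of_one_lt_of_neg one_lt_two hθ1'
  have h2pos : (0 : ℝ) < 1 - (2 : ℝ) ^ (θ - 1) := by linarith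
  set B : ℝ := (1 - (2 : ℝ) ^ (θ - 1))⁻¹ with hBdef
  have hBpos : 0 < B := by positivity
  have hB1 : 1 ≤ B := by
    rw [hBdef, le_inv_comm₀ one_pos h2pos]
    have : (0 : ℝ) ≤ (2 : ℝ) ^ (θ - 1) := Real.rpow_nonneg (by norm_num) _
    linarith
  have hBp : ∀ p : ℕ, p.Prime → (1 - (p : ℝ) ^ (θ - 1))⁻¹ ≤ B := by
    intro p hp
    have hle : (p : ℝ) ^ (θ - 1) ≤ (2 : ℝ) ^ (θ - 1) :=
      Real.rpow_le_rpow_of_nonpos two_pos (by exact_mod_cast hp.two_le) hθ1'.le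
    exact inv_anti₀ h2pos (by linarith)
  -- choose a threshold P for the `p ^ θ` bound
  have htend : Tendsto (fun n : ℕ => (n : ℝ) ^ (θ - 1) + (n : ℝ) ^ (-θ)) atTop (nhds 0) := by
    have h1 : Tendsto (fun x : ℝ => x ^ (θ - 1)) atTop (nhds 0) := by
      have := tendsto_rpow_neg_atTop (y := 1 - θ) (by linarith)
      simpa [neg_sub] using this
    have h2 : Tendsto (fun x : ℝ => x ^ (-θ)) atTop (nhds 0) :=
      tendsto_rpow_neg_atTop hθ0
    have := ((h1.comp tendsto_natCast_atTop_atTop).add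
      (h2.comp tendsto_natCast_atTop_atTop))
    simpa using this
  obtain ⟨P, hP⟩ := eventually_atTop.mp (htend.eventually_lt_const one_pos)
  have hbig : ∀ p : ℕ, p.Prime → P ≤ p → (1 - (p : ℝ) ^ (θ - 1))⁻¹ ≤ (p : ℝ) ^ θ := by
    intro p hp hPp
    have hppos : (0 : ℝ) < p := by exact_mod_cast hp.pos
    have hsum := (hP p hPp).le
    have hneg : (0 : ℝ) < (p : ℝ) ^ (-θ) := Real.rpow_pos_of_pos hppos _
    have h1 : (p : ℝ) ^ (-θ) ≤ 1 - (p : ℝ) ^ (θ - 1) := by linarith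
    calc (1 - (p : ℝ) ^ (θ - 1))⁻¹ ≤ ((p : ℝ) ^ (-θ))⁻¹ := inv_anti₀ hneg h1
      _ = (p : ℝ) ^ θ := by rw [← Real.rpow_neg hppos.le, neg_neg]
  refine ⟨B ^ P, pow_pos hBpos P, fun d hd => ⟨key d, ?_⟩⟩
  rw [key d]
  -- split the product at P
  have hsplit := Finset.prod_filter_mul_prod_filter_not d.primeFactors (fun p => p < P)
    (fun p => (1 - (p : ℝ) ^ (θ - 1))⁻¹)
  rw [← hsplit]
  have hA1 : (∏ p ∈ d.primeFactors.filter (fun p => p < P), (1 - (p : ℝ) ^ (θ - 1))⁻¹) ≤ B ^ P := by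
    calc (∏ p ∈ d.primeFactors.filter (fun p => p < P), (1 - (p : ℝ) ^ (θ - 1))⁻¹)
        ≤ ∏ _p ∈ d.primeFactors.filter (fun p => p < P), B := by
          apply Finset.prod_le_prod
          · intro p hp
            have := hplt (Nat.prime_of_mem_primeFactors (Finset.mem_filter.mp hp).1)
            exact inv_nonneg.mpr (by linarith)
          · intro p hp
            exact hBp p (Nat.prime_of_mem_primeFactors (Finset.mem_filter.mp hp).1)
      _ = B ^ (d.primeFactors.filter (fun p => p < P)).card := Finset.prod_const B
      _ ≤ B ^ P := by
          apply pow_le_pow_right₀ hB1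
          calc (d.primeFactors.filter (fun p => p < P)).card ≤ (Finset.range P).card :=
                Finset.card_le_card fun p hp =>
                  Finset.mem_range.mpr (Finset.mem_filter.mp hp).2
            _ = P := Finset.card_range P
  have hA2 : (∏ p ∈ d.primeFactors.filter (fun p => ¬ p < P), (1 - (p : ℝ) ^ (θ - 1))⁻¹)
      ≤ (d : ℝ) ^ θ := by
    have hstep : (∏ p ∈ d.primeFactors.filter (fun p => ¬ p < P), (1 - (p : ℝ) ^ (θ - 1))⁻¹)
        ≤ ∏ p ∈ d.primeFactors.filter (fun p => ¬ p < P), (p : ℝ) ^ θ := by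
      apply Finset.prod_le_prod
      · intro p hp
        have hp' := Nat.prime_of_mem_primeFactors (Finset.mem_filter.mp hp).1
        have := hplt hp'
        exact inv_nonneg.mpr (by linarith)
      · intro p hp
        exact hbig p (Nat.prime_of_mem_primeFactors (Finset.mem_filter.mp hp).1)
          (le_of_not_gt (Finset.mem_filter.mp hp).2)
    refine hstep.trans ?_
    have hsub : (∏ p ∈ d.primeFactors.filter (fun p => ¬ p < P), (p : ℝ) ^ θ)
        ≤ ∏ p ∈ d.primeFactors, (p : ℝ) ^ θ := by
      rw [← Finset.prod_filter_mul_prod_filter_not d.primeFactors (fun p => p < P)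
        (fun p => (p : ℝ) ^ θ)]
      have hge : (1 : ℝ) ≤ ∏ p ∈ d.primeFactors.filter (fun p => p < P), (p : ℝ) ^ θ := by
        calc (1 : ℝ) = ∏ _p ∈ d.primeFactors.filter (fun p => p < P), (1 : ℝ) := by simp
          _ ≤ ∏ p ∈ d.primeFactors.filter (fun p => p < P), (p : ℝ) ^ θ := by
            apply Finset.prod_le_prod (fun _ _ => zero_le_one)
            intro p hp
            have h1 : (1 : ℝ) ≤ p := by
              exact_mod_cast (Nat.prime_of_mem_primeFactors (Finset.mem_filter.mp hp).1).one_lt.le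
            exact Real.one_le_rpow h1 hθ0.le
      have hnn : (0 : ℝ) ≤ ∏ p ∈ d.primeFactors.filter (fun p => ¬ p < P), (p : ℝ) ^ θ :=
        Finset.prod_nonneg fun p _ => Real.rpow_nonneg (Nat.cast_nonneg p) θ
      exact le_mul_of_one_le_left hnn hge
    refine hsub.trans ?_
    have hprod : (∏ p ∈ d.primeFactors, (p : ℝ) ^ θ)
        = ((∏ p ∈ d.primeFactors, p : ℕ) : ℝ) ^ θ := by
      rw [Nat.cast_prod, ← Real.finset_prod_rpow _ _ (fun p _ => Nat.cast_nonneg p) θ]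
    rw [hprod]
    apply Real.rpow_le_rpow (by positivity) _ hθ0.le
    exact_mod_cast Nat.le_of_dvd hd (Nat.prod_primeFactors_dvd d)
  have hA2nonneg : (0 : ℝ) ≤ ∏ p ∈ d.primeFactors.filter (fun p => ¬ p < P),
      (1 - (p : ℝ) ^ (θ - 1))⁻¹ := by
    apply Finset.prod_nonneg
    intro p hp
    have := hplt (Nat.prime_of_mem_primeFactors (Finset.mem_filter.mp hp).1)
    exact inv_nonneg.mpr (by linarith)
  have hA1nonneg : (0 : ℝ) ≤ ∏ p ∈ d.primeFactors.filter (fun p => p < P),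
      (1 - (p : ℝ) ^ (θ - 1))⁻¹ := by
    apply Finset.prod_nonneg
    intro p hp
    have := hplt (Nat.prime_of_mem_primeFactors (Finset.mem_filter.mp hp).1)
    exact inv_nonneg.mpr (by linarith)
  exact mul_le_mul hA1 hA2 hA2nonneg (pow_nonneg hBpos.le P)
end
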